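/- Let R be a G-graded ring and P a graded weakly prime ideal of R. If I and J are graded right (or left) ideals of R such that 0 ≠ IJ ⊆ P, then I ⊆ P or J ⊆ P. -/

import Mathlib

variable {G R : Type*} [AddGroup G] [DecidableEq G] [Ring R]

/-- A graded right ideal: an additive subgroup closed under right multiplication that
contains all homogeneous components of its elements. -/
def IsGradedRightIdeal (𝒜 : G → AddSubgroup R) [GradedRing 𝒜] (I : AddSubgroup R) : Prop :=
  (∀ a ∈ I, ∀ r : R, a * r ∈ I) ∧ ∀ a ∈ I, ∀ g : G, (DirectSum.decompose 𝒜 a g : R) ∈ I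

/-- A graded left ideal: an additive subgroup closed under left multiplication that
contains all homogeneous components of its elements. -/
def IsGradedLeftIdeal (𝒜 : G → AddSubgroup R) [GradedRing 𝒜] (I : AddSubgroup R) : Prop :=
  (∀ a ∈ I, ∀ r : R, r * a ∈ I) ∧ ∀ a ∈ I, ∀ g : G, (DirectSum.decompose 𝒜 a g : R) ∈ I

/-- A two-sided ideal is graded if it contains all homogeneous components of its elements. -/
def IsGradedIdeal (𝒜 : G → AddSubgroup R) [GradedRing 𝒜] (P : TwoSidedIdeal R) : Prop :=
  ∀ a ∈ P, ∀ g : G, (DirectSum.decompose 𝒜 a g : R) ∈ P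

/-- Graded weakly prime: a proper graded ideal `P` such that `0 ≠ IJ ⊆ P` for graded
ideals `I, J` implies `I ⊆ P` or `J ⊆ P`. -/
def IsGradedWeaklyPrime (𝒜 : G → AddSubgroup R) [GradedRing 𝒜] (P : TwoSidedIdeal R) : Prop :=
  P ≠ ⊤ ∧ IsGradedIdeal 𝒜 P ∧
    ∀ I J : TwoSidedIdeal R, IsGradedIdeal 𝒜 I → IsGradedIdeal 𝒜 J →
      (∃ a ∈ I, ∃ b ∈ J, a * b ≠ 0) → (∀ a ∈ I, ∀ b ∈ J, a * b ∈ P) →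
      I ≤ P ∨ J ≤ P


/-! The two-sided ideals `RIR` and `RJR` generated by `I` and `J` are graded, and `IJ ⊆ P`
already forces `(RIR)(RJR) ⊆ P` because `I R ⊆ I` (or `R J ⊆ J`). Weak primeness applied
to them gives `I ⊆ RIR ⊆ P` or `J ⊆ RJR ⊆ P`. -/

open DirectSum

namespace TwoSidedIdeal

section Graded

variable {ι σ A : Type*} [DecidableEq ι] [AddMonoid ι] [Ring A] [SetLike σ A]
  [AddSubgroupClass σ A] (𝒜 : ι → σ) [GradedRing 𝒜]

def gradedCore (T : TwoSidedIdeal A) : TwoSidedIdeal A :=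
  .mk' {x | ∀ i, (decompose 𝒜 x i : A) ∈ T}
    (fun i => by simp [T.zero_mem])
    (fun hx hy i => by simpa using T.add_mem (hx i) (hy i))
    (fun hx i => by rw [decompose_neg]; exact T.neg_mem (hx i))
    (fun {r x} hx i => by
      classical
      rw [decompose_mul, coe_mul_apply]
      exact sum_mem fun ij _ => T.mul_mem_left _ _ (hx ij.2))
    (fun {x r} hx i => by
      classical
      rw [decompose_mul, coe_mul_apply]
      exact sum_mem fun ij _ => T.mul_mem_right _ _ (hx ij.1))

theorem mem_gradedCore {T : TwoSidedIdeal A} {x : A} :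
    x ∈ T.gradedCore 𝒜 ↔ ∀ i, (decompose 𝒜 x i : A) ∈ T :=
  mem_mk' ..

theorem decompose_mem_span {s : Set A} (hs : ∀ a ∈ s, ∀ i, (decompose 𝒜 a i : A) ∈ s)
    {x : A} (hx : x ∈ span s) (i : ι) : (decompose 𝒜 x i : A) ∈ span s :=
  have hspan : span s ≤ (span s).gradedCore 𝒜 :=
    span_le.2 fun a ha => (mem_gradedCore 𝒜).2 fun i => subset_span (hs a ha i)
  (mem_gradedCore 𝒜).1 (hspan hx) i

end Graded

theorem mul_mem_of_mem_span {P : TwoSidedIdeal R} {s t : Set R}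
    (h : ∀ a ∈ s, ∀ r : R, ∀ b ∈ t, a * r * b ∈ P) {x y : R}
    (hx : x ∈ span s) (hy : y ∈ span t) : x * y ∈ P := by
  rw [mem_span_iff_mem_addSubgroup_closure] at hx hy
  induction hx using AddSubgroup.closure_induction with
  | mem x hx =>
    obtain ⟨_, ⟨u, -, a, ha, rfl⟩, u', -, rfl⟩ := hx
    induction hy using AddSubgroup.closure_induction with
    | mem y hy =>
      obtain ⟨_, ⟨v, -, b, hb, rfl⟩, v', -, rfl⟩ := hy
      have := P.mul_mem_right _ v' (P.mul_mem_left u _ (h a ha (u' * v) b hb))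
      simpa only [mul_assoc] using this
    | zero => simp [P.zero_mem]
    | add y z _ _ hy hz => simpa only [mul_add] using P.add_mem hy hz
    | neg y _ hy => simpa only [mul_neg] using P.neg_mem hy
  | zero => simp [P.zero_mem]
  | add x z _ _ hx hz => simpa only [add_mul] using P.add_mem hx hz
  | neg x _ hx => simpa only [neg_mul] using P.neg_mem hx

end TwoSidedIdeal

open TwoSidedIdeal in
/-- If `P` is a graded weakly prime ideal and `I, J` are graded right (left) ideals with
`0 ≠ IJ ⊆ P`, then `I ⊆ P` or `J ⊆ P`. -/
theorem stmt0 (𝒜 : G → AddSubgroup R) [GradedRing 𝒜] (P : TwoSidedIdeal R)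
    (hP : IsGradedWeaklyPrime 𝒜 P) (I J : AddSubgroup R)
    (hIJ : (IsGradedRightIdeal 𝒜 I ∧ IsGradedRightIdeal 𝒜 J) ∨
           (IsGradedLeftIdeal 𝒜 I ∧ IsGradedLeftIdeal 𝒜 J))
    (hne : ∃ a ∈ I, ∃ b ∈ J, a * b ≠ 0)
    (hsub : ∀ a ∈ I, ∀ b ∈ J, a * b ∈ P) :
    (∀ a ∈ I, a ∈ P) ∨ (∀ b ∈ J, b ∈ P) := by
  obtain ⟨-, -, hPprime⟩ := hP
  have hgraded : (∀ a ∈ I, ∀ g, (decompose 𝒜 a g : R) ∈ I) ∧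
      ∀ b ∈ J, ∀ g, (decompose 𝒜 b g : R) ∈ J := by
    rcases hIJ with ⟨hI, hJ⟩ | ⟨hI, hJ⟩ <;> exact ⟨hI.2, hJ.2⟩
  have hIRJ : ∀ a ∈ I, ∀ r : R, ∀ b ∈ J, a * r * b ∈ P := by
    rcases hIJ with ⟨hI, -⟩ | ⟨-, hJ⟩
    · exact fun a ha r b hb => hsub _ (hI.1 a ha r) b hb
    · exact fun a ha r b hb => mul_assoc a r b ▸ hsub a ha _ (hJ.1 b hb r)
  obtain ⟨a, ha, b, hb, hab⟩ := hne
  have hspan := hPprime (span I) (span J)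
    (fun _ hx => decompose_mem_span 𝒜 hgraded.1 hx)
    (fun _ hy => decompose_mem_span 𝒜 hgraded.2 hy)
    ⟨a, subset_span ha, b, subset_span hb, hab⟩
    (fun _ hx _ hy => mul_mem_of_mem_span hIRJ hx hy)
  exact hspan.imp (fun h _ ha => h (subset_span ha)) (fun h _ hb => h (subset_span hb))
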